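/- Suppose in the setting above additionally: (i) ℓ(u) = −Σ_z D_s(z|u) log D_s(z|u) is τ-Lipschitz on the finite metric space (U, δ), and (ii) for each u there exist a transport family Λ*_u ∈ C*_u (i.e., D_τ(z'|u) = Σ_z D_s(z|u)Λ*_u(z'|z)) and a transport family Λ_u with p_τ(z'|u) = Σ_z D_s(z|u)Λ_u(z'|z) and Λ_u(z'|z) > 0 whenever Λ*_u(z'|z) > 0. Then err_τ ≤ err_s + τ·W₁(D_τ(u), D_s(u)) + Σ_u D_τ(u)[ Σ_z D_s(z|u) H(Λ*_u(·|z)) + Σ_z D_s(z|u) KL(Λ*_u(·|z) ‖ Λ_u(·|z)) ], where W₁ is the Wasserstein-1 distance between the feature marginals with cost δ. -/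
import Mathlib
open Pointwise


/-- Shannon entropy of a finite distribution. -/
noncomputable def shannonH {Z : Type*} [Fintype Z] (μ : Z → ℝ) : ℝ :=
  -∑ z, μ z * Real.log (μ z)

/-- Kullback–Leibler divergence between finite distributions. -/
noncomputable def klDiv {Z' : Type*} [Fintype Z'] (μ ν : Z' → ℝ) : ℝ :=
  ∑ z', μ z' * Real.log (μ z' / ν z')

open Finset in
lemma perU {Z Z' : Type*} [Fintype Z] [Fintype Z']
    (a : Z → ℝ) (ha : ∀ z, 0 < a z)
    (Λs Λ : Z → Z' → ℝ)
    (hΛsnn : ∀ z z', 0 ≤ Λs z z') (hΛss : ∀ z, ∑ z', Λs z z' = 1)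
    (hΛnn : ∀ z z', 0 ≤ Λ z z')
    (habs : ∀ z z', 0 < Λs z z' → 0 < Λ z z') :
    -∑ z', (∑ z, a z * Λs z z') * Real.log (∑ z, a z * Λ z z')
      ≤ (-∑ z, a z * Real.log (a z))
        + (∑ z, a z * shannonH (Λs z) + ∑ z, a z * klDiv (Λs z) (Λ z)) := by
  have key : ∀ z z', a z * Λs z z' * Real.log (a z * Λ z z')
      ≤ a z * Λs z z' * Real.log (∑ w, a w * Λ w z') := by
    intro z z'
    rcases eq_or_lt_of_le (hΛsnn z z') with h | h
    · simp [← h]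
    · have hΛ := habs z z' h
      apply mul_le_mul_of_nonneg_left _ (mul_nonneg (ha z).le (hΛsnn z z'))
      apply Real.log_le_log (mul_pos (ha z) hΛ)
      exact Finset.single_le_sum (f := fun w => a w * Λ w z')
        (fun w _ => mul_nonneg (ha w).le (hΛnn w z')) (Finset.mem_univ z)
  have step1 : ∑ z', (∑ z, a z * Λs z z') * Real.log (∑ z, a z * Λ z z')
      = ∑ z, ∑ z', a z * Λs z z' * Real.log (∑ w, a w * Λ w z') := by
    simp_rw [Finset.sum_mul]
    exact Finset.sum_comm
  have step3 : (-∑ z, a z * Real.log (a z))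
        + (∑ z, a z * shannonH (Λs z) + ∑ z, a z * klDiv (Λs z) (Λ z))
      = -∑ z, ∑ z', a z * Λs z z' * Real.log (a z * Λ z z') := by
    unfold shannonH klDiv
    have hz : ∀ z, -(a z * Real.log (a z))
        + (a z * (-∑ z', Λs z z' * Real.log (Λs z z'))
          + a z * ∑ z', Λs z z' * Real.log (Λs z z' / Λ z z'))
        = -∑ z', a z * Λs z z' * Real.log (a z * Λ z z') := by
      intro z
      have h1 : a z * Real.log (a z) = ∑ z', a z * Λs z z' * Real.log (a z) := by
        have : ∑ z', a z * Λs z z' * Real.log (a z)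
            = (∑ z', Λs z z') * (a z * Real.log (a z)) := by
          rw [Finset.sum_mul]
          exact Finset.sum_congr rfl fun z' _ => by ring
        rw [this, hΛss z, one_mul]
      rw [h1, mul_neg, Finset.mul_sum, Finset.mul_sum, ← Finset.sum_neg_distrib,
        ← Finset.sum_neg_distrib, ← Finset.sum_add_distrib, ← Finset.sum_add_distrib,
        ← Finset.sum_neg_distrib]
      apply Finset.sum_congr rfl
      intro z' _
      rcases eq_or_lt_of_le (hΛsnn z z') with h | h
      · simp [← h]
      · have hΛ := habs z z' h
        rw [Real.log_div h.ne' hΛ.ne', Real.log_mul (ha z).ne' hΛ.ne']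
        ring
    calc (-∑ z, a z * Real.log (a z))
          + (∑ z, a z * (-∑ z', Λs z z' * Real.log (Λs z z'))
            + ∑ z, a z * ∑ z', Λs z z' * Real.log (Λs z z' / Λ z z'))
        = ∑ z, (-(a z * Real.log (a z))
            + (a z * (-∑ z', Λs z z' * Real.log (Λs z z'))
              + a z * ∑ z', Λs z z' * Real.log (Λs z z' / Λ z z'))) := by
          rw [Finset.sum_add_distrib, Finset.sum_add_distrib, Finset.sum_neg_distrib]
      _ = ∑ z, -∑ z', a z * Λs z z' * Real.log (a z * Λ z z') :=
          Finset.sum_congr rfl fun z _ => hz z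
      _ = -∑ z, ∑ z', a z * Λs z z' * Real.log (a z * Λ z z') := by
          rw [Finset.sum_neg_distrib]
  rw [step1, step3, neg_le_neg_iff]
  exact Finset.sum_le_sum fun z _ => Finset.sum_le_sum fun z' _ => key z z'

theorem stmt_17 {U Z Z' : Type*} [Fintype U] [Fintype Z] [Fintype Z']
    [MetricSpace U]
    (Dsu : U → ℝ) (hDsu : ∀ u, 0 ≤ Dsu u) (hDsus : ∑ u, Dsu u = 1)
    (Dsc : U → Z → ℝ) (hDsc : ∀ u z, 0 < Dsc u z) (hDscs : ∀ u, ∑ z, Dsc u z = 1)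
    (Dτu : U → ℝ) (hDτu : ∀ u, 0 ≤ Dτu u) (hDτus : ∑ u, Dτu u = 1)
    (Dτc : U → Z' → ℝ) (hDτc : ∀ u z', 0 ≤ Dτc u z') (hDτcs : ∀ u, ∑ z', Dτc u z' = 1)
    (pτ : U → Z' → ℝ) (hpτ : ∀ u z', 0 ≤ pτ u z') (hpτs : ∀ u, ∑ z', pτ u z' = 1)
    (τ : ℝ) (hτ : 0 ≤ τ)
    -- (i) the per-feature source conditional entropy ℓ is τ-Lipschitz on (U, dist)
    (hLip : ∀ u₁ u₂ : U,
      |(-∑ z, Dsc u₁ z * Real.log (Dsc u₁ z)) - (-∑ z, Dsc u₂ z * Real.log (Dsc u₂ z))|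
        ≤ τ * dist u₁ u₂)
    -- (ii) transport families
    (Λs Λ : U → Z → Z' → ℝ)
    (hΛsnn : ∀ u z z', 0 ≤ Λs u z z') (hΛss : ∀ u z, ∑ z', Λs u z z' = 1)
    (hΛnn : ∀ u z z', 0 ≤ Λ u z z') (hΛsum : ∀ u z, ∑ z', Λ u z z' = 1)
    (hmixs : ∀ u z', Dτc u z' = ∑ z, Dsc u z * Λs u z z')
    (hmix : ∀ u z', pτ u z' = ∑ z, Dsc u z * Λ u z z')
    (habs : ∀ u z z', 0 < Λs u z z' → 0 < Λ u z z') :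
    -∑ u, ∑ z', Dτu u * Dτc u z' * Real.log (pτ u z')
      ≤ (-∑ u, ∑ z, Dsu u * Dsc u z * Real.log (Dsc u z))
        + τ * sInf {c : ℝ | ∃ π : U → U → ℝ,
            (∀ u₁ u₂, 0 ≤ π u₁ u₂) ∧
            (∀ u₁, ∑ u₂, π u₁ u₂ = Dτu u₁) ∧
            (∀ u₂, ∑ u₁, π u₁ u₂ = Dsu u₂) ∧
            c = ∑ u₁, ∑ u₂, π u₁ u₂ * dist u₁ u₂}
        + ∑ u, Dτu u *
            (∑ z, Dsc u z * shannonH (Λs u z)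
              + ∑ z, Dsc u z * klDiv (Λs u z) (Λ u z)) := by
  set ℓ : U → ℝ := fun u => -∑ z, Dsc u z * Real.log (Dsc u z) with hℓ
  set A : U → ℝ := fun u => ∑ z, Dsc u z * shannonH (Λs u z)
      + ∑ z, Dsc u z * klDiv (Λs u z) (Λ u z) with hA
  set S : Set ℝ := {c : ℝ | ∃ π : U → U → ℝ,
      (∀ u₁ u₂, 0 ≤ π u₁ u₂) ∧
      (∀ u₁, ∑ u₂, π u₁ u₂ = Dτu u₁) ∧
      (∀ u₂, ∑ u₁, π u₁ u₂ = Dsu u₂) ∧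
      c = ∑ u₁, ∑ u₂, π u₁ u₂ * dist u₁ u₂} with hS
  -- per-u bound
  have hper : ∀ u, -∑ z', Dτc u z' * Real.log (pτ u z') ≤ ℓ u + A u := by
    intro u
    have := perU (Dsc u) (hDsc u) (Λs u) (Λ u) (hΛsnn u) (hΛss u) (hΛnn u) (habs u)
    simp_rw [hmixs u, hmix u]
    simpa [hℓ, hA, add_assoc] using this
  -- rewrite LHS
  have lhs_eq : -∑ u, ∑ z', Dτu u * Dτc u z' * Real.log (pτ u z')
      = ∑ u, Dτu u * (-∑ z', Dτc u z' * Real.log (pτ u z')) := by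
    rw [← Finset.sum_neg_distrib]
    apply Finset.sum_congr rfl
    intro u _
    rw [mul_neg, Finset.mul_sum, neg_inj]
    exact Finset.sum_congr rfl fun z' _ => by ring
  have hsrc : ∑ u, Dsu u * ℓ u = -∑ u, ∑ z, Dsu u * Dsc u z * Real.log (Dsc u z) := by
    rw [← Finset.sum_neg_distrib]
    apply Finset.sum_congr rfl
    intro u _
    rw [hℓ, mul_neg, Finset.mul_sum, neg_inj]
    exact Finset.sum_congr rfl fun z _ => by ring
  -- Wasserstein bound
  have hne : S.Nonempty := by
    refine ⟨∑ u₁, ∑ u₂, (Dτu u₁ * Dsu u₂) * dist u₁ u₂,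
      fun u₁ u₂ => Dτu u₁ * Dsu u₂, fun u₁ u₂ => mul_nonneg (hDτu u₁) (hDsu u₂),
      fun u₁ => ?_, fun u₂ => ?_, rfl⟩
    · rw [← Finset.mul_sum, hDsus, mul_one]
    · rw [← Finset.sum_mul, hDτus, one_mul]
  have hb : ∀ c ∈ S, ∑ u, Dτu u * ℓ u - ∑ u, Dsu u * ℓ u ≤ τ * c := by
    rintro c ⟨π, hπnn, hπ1, hπ2, rfl⟩
    have e1 : ∑ u, Dτu u * ℓ u = ∑ u₁, ∑ u₂, π u₁ u₂ * ℓ u₁ :=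
      Finset.sum_congr rfl fun u₁ _ => by rw [← hπ1 u₁, Finset.sum_mul]
    have e2 : ∑ u, Dsu u * ℓ u = ∑ u₁, ∑ u₂, π u₁ u₂ * ℓ u₂ := by
      rw [Finset.sum_comm]
      exact Finset.sum_congr rfl fun u₂ _ => by rw [← hπ2 u₂, Finset.sum_mul]
    rw [e1, e2, ← Finset.sum_sub_distrib, Finset.mul_sum]
    refine Finset.sum_le_sum fun u₁ _ => ?_
    rw [← Finset.sum_sub_distrib, Finset.mul_sum]
    refine Finset.sum_le_sum fun u₂ _ => ?_
    calc π u₁ u₂ * ℓ u₁ - π u₁ u₂ * ℓ u₂ = π u₁ u₂ * (ℓ u₁ - ℓ u₂) := by ring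
      _ ≤ π u₁ u₂ * (τ * dist u₁ u₂) :=
          mul_le_mul_of_nonneg_left ((le_abs_self _).trans (hLip u₁ u₂)) (hπnn u₁ u₂)
      _ = τ * (π u₁ u₂ * dist u₁ u₂) := by ring
  have hW : ∑ u, Dτu u * ℓ u ≤ ∑ u, Dsu u * ℓ u + τ * sInf S := by
    have hsmul : sInf (τ • S) = τ • sInf S := Real.sInf_smul_of_nonneg hτ S
    have h2 : ∑ u, Dτu u * ℓ u - ∑ u, Dsu u * ℓ u ≤ sInf (τ • S) := by
      apply le_csInf (hne.smul_set)
      rintro b ⟨c, hc, rfl⟩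
      simpa [smul_eq_mul] using hb c hc
    rw [hsmul, smul_eq_mul] at h2
    linarith
  -- assemble
  rw [lhs_eq]
  have h3 : ∑ u, Dτu u * (-∑ z', Dτc u z' * Real.log (pτ u z'))
      ≤ ∑ u, Dτu u * (ℓ u + A u) :=
    Finset.sum_le_sum fun u _ => mul_le_mul_of_nonneg_left (hper u) (hDτu u)
  have h4 : ∑ u, Dτu u * (ℓ u + A u) = ∑ u, Dτu u * ℓ u + ∑ u, Dτu u * A u := by
    rw [← Finset.sum_add_distrib]
    exact Finset.sum_congr rfl fun u _ => by ring
  rw [← hsrc]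
  calc ∑ u, Dτu u * (-∑ z', Dτc u z' * Real.log (pτ u z'))
      ≤ ∑ u, Dτu u * ℓ u + ∑ u, Dτu u * A u := by rw [← h4]; exact h3
    _ ≤ (∑ u, Dsu u * ℓ u + τ * sInf S) + ∑ u, Dτu u * A u := by linarith
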